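/- Under the hypotheses of the majorization lemma above (Gaussian vector with error variances ω_j^ι weakly increasing in the identity ordering), for every permutation σ one has ∑_j ω_j^σ ≥ ∑_j ω_j^ι; i.e., the identity ordering minimizes the trace of the error-variance matrix over all orderings. -/

import Mathlib

open Matrix BigOperators

/-- Conditional variance of coordinate `j` of a centered Gaussian vector with covariance `S`,
given the coordinates in the index set `A`, i.e. the Schur complement
`S j j - S_{jA} (S_{AA})⁻¹ S_{Aj}`. -/
noncomputable def condVar {p : ℕ} (S : Matrix (Fin p) (Fin p) ℝ) (j : Fin p)
    (A : Finset (Fin p)) : ℝ :=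
  S j j - ∑ s : A, ∑ t : A,
    S j s.1 * (Matrix.of fun a b : A => S a.1 b.1)⁻¹ s t * S t.1 j

/-- The set of predecessors of node `j` under the ordering `σ`. -/
def PRED {p : ℕ} (σ : Equiv.Perm (Fin p)) (j : Fin p) : Finset (Fin p) :=
  Finset.univ.filter fun i => σ.symm i < σ.symm j

/-!
Let `U` and `V` be the matrices whose `j`-th columns are the coefficient vectors of the residuals
`X_j - E[X_j | X_{PRED_j}]` for the identity ordering and for `σ`, so that `ω_j^σ = (VᵀΣV)_jj`.
Residuals are `Σ`-orthogonal to the coordinates they were regressed on, hence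
`UᵀΣU = diag ω^ι`, and with `V = U A` this gives `∑_j ω_j^σ = ∑_k ω_k^ι ∑_j A_kj²`.
Since `U` is unit upper triangular and `V` is unit triangular for the `σ`-order, every trailing
principal block of `A = U⁻¹ V` has determinant `1`; AM-GM on the eigenvalues of its Gram matrix
bounds the squared norm of the last `m` rows of `A` below by `m`. Abel summation against the
increasing nonnegative `ω^ι` concludes.
-/

open Finset

section TailSums

variable {ι : Type*} [LinearOrder ι] [LocallyFiniteOrderTop ι]

theorem mul_sum_Ici_le_sum_Ici_mul [WellFoundedGT ι] {w d : ι → ℝ} (hw : Monotone w)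
    (hd : ∀ k, 0 ≤ ∑ i ∈ Ici k, d i) (k : ι) :
    w k * ∑ i ∈ Ici k, d i ≤ ∑ i ∈ Ici k, w i * d i := by
  induction k using WellFoundedGT.induction with
  | _ k ih =>
  rw [← Ioi_insert, sum_insert notMem_Ioi_self, sum_insert notMem_Ioi_self, mul_add]
  rcases (Ioi k).eq_empty_or_nonempty with hempty | hne
  · simp [hempty]
  set k' := (Ioi k).min' hne
  have hkk' : k < k' := mem_Ioi.mp ((Ioi k).min'_mem hne)
  have htail : Ioi k = Ici k' := by
    ext i
    simp only [mem_Ioi, mem_Ici]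
    exact ⟨fun hi => (Ioi k).min'_le i (mem_Ioi.mpr hi), hkk'.trans_le⟩
  rw [htail]
  gcongr
  calc w k * ∑ i ∈ Ici k', d i ≤ w k' * ∑ i ∈ Ici k', d i := by
        gcongr
        exacts [hd k', hw hkk'.le]
    _ ≤ ∑ i ∈ Ici k', w i * d i := ih k' hkk'

theorem sum_mul_nonneg_of_sum_Ici_nonneg [Fintype ι] {w d : ι → ℝ} (hw : Monotone w)
    (hw₀ : ∀ i, 0 ≤ w i) (hd : ∀ k, 0 ≤ ∑ i ∈ Ici k, d i) : 0 ≤ ∑ i, w i * d i := by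
  rcases isEmpty_or_nonempty ι with _ | _
  · simp
  set k := (univ : Finset ι).min' univ_nonempty
  have hIci : Ici k = univ := eq_univ_of_forall fun i => mem_Ici.mpr (min'_le _ _ (mem_univ i))
  rw [← hIci]
  exact (mul_nonneg (hw₀ k) (hd k)).trans (mul_sum_Ici_le_sum_Ici_mul hw hd k)

end TailSums

theorem Real.card_le_sum_of_prod_eq_one {ι : Type*} {s : Finset ι} {z : ι → ℝ}
    (hz : ∀ i ∈ s, 0 ≤ z i) (hprod : ∏ i ∈ s, z i = 1) : (#s : ℝ) ≤ ∑ i ∈ s, z i := by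
  have hpos : ∀ i ∈ s, 0 < z i := fun i hi =>
    (hz i hi).lt_of_ne' (prod_ne_zero_iff.mp (hprod ▸ one_ne_zero) i hi)
  have hlog : ∑ i ∈ s, Real.log (z i) = 0 := by
    rw [← Real.log_prod fun i hi => (hpos i hi).ne', hprod, Real.log_one]
  have := sum_le_sum fun i hi => Real.log_le_sub_one_of_pos (hpos i hi)
  rw [hlog, sum_sub_distrib, sum_const, nsmul_one] at this
  linarith

namespace Matrix

variable {n : Type*} [Fintype n]

theorem card_le_sum_sq_of_det_eq_one [DecidableEq n] {B : Matrix n n ℝ} (hB : B.det = 1) :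
    (Fintype.card n : ℝ) ≤ ∑ i, ∑ j, B i j ^ 2 := by
  have hP := posSemidef_conjTranspose_mul_self B
  have hprod : ∏ i, hP.1.eigenvalues i = 1 := by
    simpa [hB] using hP.1.det_eq_prod_eigenvalues.symm
  have htrace : (Bᴴ * B).trace = ∑ i, ∑ j, B i j ^ 2 := by
    rw [trace, sum_comm]
    simp [mul_apply, sq]
  rw [← htrace, hP.1.trace_eq_sum_eigenvalues]
  simpa using Real.card_le_sum_of_prod_eq_one (fun i _ => hP.eigenvalues_nonneg i) hprod

theorem BlockTriangular.det_eq_prod_diag [DecidableEq n] {R α : Type*} [CommRing R]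
    [LinearOrder α] {M : Matrix n n R} {b : n → α} (hM : M.BlockTriangular b)
    (hb : Function.Injective b) :
    M.det = ∏ i, M i i :=
  letI : LinearOrder n := LinearOrder.lift' b hb
  det_of_isUpperTriangular hM

theorem transpose_mul_diagonal_mul_apply_self {m R : Type*} [DecidableEq n] [CommSemiring R]
    (A : Matrix n m R) (d : n → R) (j : m) :
    (Aᵀ * diagonal d * A) j j = ∑ k, d k * A k j ^ 2 := by
  simp only [mul_apply, transpose_apply, diagonal_apply, mul_ite, mul_zero, sum_ite_eq', mem_univ,
    if_true, sq]
  exact sum_congr rfl fun k _ => by ring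

theorem IsUpperTriangular.submatrix_Ici_mul {R : Type*} [NonUnitalNonAssocSemiring R]
    [LinearOrder n] [LocallyFiniteOrderTop n] {M : Matrix n n R} (hM : M.IsUpperTriangular)
    (N : Matrix n n R) (k : n) :
    (M * N).submatrix ((↑) : Ici k → n) ((↑) : Ici k → n) =
      M.submatrix ((↑) : Ici k → n) ((↑) : Ici k → n) *
        N.submatrix ((↑) : Ici k → n) ((↑) : Ici k → n) := by
  ext i j
  simp only [submatrix_apply, mul_apply]
  rw [sum_coe_sort (Ici k) fun l => M i l * N l j]
  refine (sum_subset (subset_univ _) fun l _ hl => ?_).symm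
  rw [hM ((not_le.mp (mem_Ici.not.mp hl)).trans_le (mem_Ici.mp i.2)), zero_mul]

end Matrix

section Regression

variable {p : ℕ} (S : Matrix (Fin p) (Fin p) ℝ)

noncomputable def regressionCoeff (A : Finset (Fin p)) (j : Fin p) : A → ℝ :=
  (S.submatrix ((↑) : A → Fin p) ((↑) : A → Fin p))⁻¹ *ᵥ fun a => S a j

/-- `regressionResidual S A j ⬝ᵥ X = X_j - E[X_j | X_A]` for `X ~ N(0, S)`. -/
noncomputable def regressionResidual (A : Finset (Fin p)) (j : Fin p) : Fin p → ℝ :=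
  Pi.single j 1 - ∑ a : A, regressionCoeff S A j a • Pi.single a.1 1

variable {S}

theorem condVar_eq_sub_sum_mul_regressionCoeff (A : Finset (Fin p)) (j : Fin p) :
    condVar S j A = S j j - ∑ a : A, S j a * regressionCoeff S A j a := by
  simp only [condVar, regressionCoeff, mulVec, dotProduct, mul_sum, mul_assoc]
  rfl

theorem mulVec_regressionResidual_apply (A : Finset (Fin p)) (j i : Fin p) :
    (S *ᵥ regressionResidual S A j) i = S i j - ∑ a : A, S i a * regressionCoeff S A j a := by
  simp [regressionResidual, mulVec_sub, mulVec_sum, mulVec_smul, mul_comm]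

theorem mulVec_regressionResidual_apply_of_mem (hS : S.PosDef) {A : Finset (Fin p)} {i : Fin p}
    (hi : i ∈ A) (j : Fin p) : (S *ᵥ regressionResidual S A j) i = 0 := by
  have hM := (hS.submatrix Subtype.val_injective (e := ((↑) : A → Fin p))).isUnit
  have hreg : S.submatrix (Subtype.val : A → Fin p) Subtype.val *ᵥ regressionCoeff S A j =
      fun a : A => S a j := by
    rw [regressionCoeff, mulVec_mulVec, mul_nonsing_inv _ ((isUnit_iff_isUnit_det _).mp hM),
      one_mulVec]
  rw [mulVec_regressionResidual_apply, ← congrFun hreg (⟨i, hi⟩ : A), sub_eq_zero]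
  rfl

theorem regressionResidual_apply_of_notMem {A : Finset (Fin p)} {i : Fin p} (hi : i ∉ A)
    (j : Fin p) : regressionResidual S A j i = (Pi.single j 1 : Fin p → ℝ) i := by
  simp only [regressionResidual, Pi.sub_apply, Finset.sum_apply, Pi.smul_apply, Pi.single_apply,
    smul_eq_mul, mul_ite, mul_one, mul_zero, sub_eq_self]
  exact sum_eq_zero fun a _ => if_neg fun h : i = a => hi (h ▸ a.2)

theorem dotProduct_mulVec_regressionResidual_eq_zero (hS : S.PosDef) {A : Finset (Fin p)}
    {x : Fin p → ℝ} (hx : ∀ i, x i ≠ 0 → i ∈ A) (j : Fin p) :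
    x ⬝ᵥ (S *ᵥ regressionResidual S A j) = 0 := by
  refine sum_eq_zero fun i _ => ?_
  by_cases hxi : x i = 0
  · rw [hxi, zero_mul]
  · rw [mulVec_regressionResidual_apply_of_mem hS (hx i hxi), mul_zero]

theorem regressionResidual_dotProduct_mulVec_regressionResidual (hS : S.PosDef)
    (A : Finset (Fin p)) (j : Fin p) :
    regressionResidual S A j ⬝ᵥ (S *ᵥ regressionResidual S A j) = condVar S j A := by
  have hsupp : ∀ i, (regressionResidual S A j - Pi.single j 1 : Fin p → ℝ) i ≠ 0 → i ∈ A := by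
    intro i hi
    by_contra hiA
    simp [regressionResidual_apply_of_notMem hiA] at hi
  calc regressionResidual S A j ⬝ᵥ (S *ᵥ regressionResidual S A j)
      = Pi.single j 1 ⬝ᵥ (S *ᵥ regressionResidual S A j)
        + (regressionResidual S A j - Pi.single j 1) ⬝ᵥ (S *ᵥ regressionResidual S A j) := by
        rw [← add_dotProduct, add_sub_cancel]
    _ = condVar S j A := by
        rw [single_dotProduct, dotProduct_mulVec_regressionResidual_eq_zero hS hsupp, one_mul,
          add_zero, mulVec_regressionResidual_apply, condVar_eq_sub_sum_mul_regressionCoeff]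

theorem condVar_nonneg (hS : S.PosDef) (A : Finset (Fin p)) (j : Fin p) :
    0 ≤ condVar S j A :=
  regressionResidual_dotProduct_mulVec_regressionResidual hS A j ▸
    hS.posSemidef.dotProduct_mulVec_nonneg _

end Regression

section ResidualMatrix

variable {p : ℕ} (S : Matrix (Fin p) (Fin p) ℝ)

noncomputable def residualMatrix (P : Fin p → Finset (Fin p)) : Matrix (Fin p) (Fin p) ℝ :=
  (of fun j => regressionResidual S (P j) j)ᵀ

variable {S} {P : Fin p → Finset (Fin p)}

theorem residualMatrix_apply_self (hP : ∀ j, j ∉ P j) (j : Fin p) :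
    residualMatrix S P j j = 1 := by
  simp [residualMatrix, regressionResidual_apply_of_notMem (hP j)]

theorem blockTriangular_residualMatrix {α : Type*} [Preorder α] {b : Fin p → α}
    (hP : ∀ i j, i ∈ P j → b i < b j) : (residualMatrix S P).BlockTriangular b := by
  intro i j hji
  have hij : i ≠ j := fun h => (h ▸ hji).false
  simp [residualMatrix, regressionResidual_apply_of_notMem fun hi => (hP i j hi).asymm hji, hij]

theorem det_submatrix_residualMatrix {α : Type*} [LinearOrder α] {b : Fin p → α}
    (hP : ∀ i j, i ∈ P j → b i < b j) (hb : Function.Injective b) {m : Type*} [Fintype m]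
    [DecidableEq m] {f : m → Fin p} (hf : Function.Injective f) :
    ((residualMatrix S P).submatrix f f).det = 1 := by
  rw [((blockTriangular_residualMatrix hP).submatrix).det_eq_prod_diag (hb.comp hf)]
  exact prod_eq_one fun i _ => residualMatrix_apply_self (fun j hj => (hP j j hj).false) (f i)

theorem transpose_mul_mul_residualMatrix_apply_self (hS : S.PosDef) (j : Fin p) :
    ((residualMatrix S P)ᵀ * S * residualMatrix S P) j j = condVar S j (P j) := by
  rw [mul_mul_apply]
  exact regressionResidual_dotProduct_mulVec_regressionResidual hS (P j) j

theorem transpose_mul_mul_residualMatrix_Iio (hS : S.PosDef) :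
    (residualMatrix S Iio)ᵀ * S * residualMatrix S Iio =
      diagonal fun k => condVar S k (Iio k) := by
  set U := residualMatrix S Iio
  have hupper : ∀ j k, j < k → (Uᵀ * S * U) j k = 0 := by
    intro j k hjk
    rw [mul_mul_apply]
    refine dotProduct_mulVec_regressionResidual_eq_zero hS (fun i hi => ?_) k
    rw [mem_Iio]
    by_cases hij : i < j
    · exact hij.trans hjk
    have hresidual : Uᵀ j i = (Pi.single j 1 : Fin p → ℝ) i :=
      regressionResidual_apply_of_notMem (mem_Iio.not.mpr hij) j
    obtain rfl : i = j := by
      by_contra hne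
      exact hi (by rw [hresidual, Pi.single_eq_of_ne hne])
    exact hjk
  have hsymm : (Uᵀ * S * U).IsHermitian := by
    simpa using isHermitian_conjTranspose_mul_mul U hS.1
  ext j k
  rcases lt_trichotomy j k with hjk | rfl | hkj
  · rw [hupper j k hjk, diagonal_apply_ne _ hjk.ne]
  · rw [transpose_mul_mul_residualMatrix_apply_self hS, diagonal_apply_eq]
  · rw [← hsymm.apply, hupper k j hkj, diagonal_apply_ne _ hkj.ne', star_zero]

end ResidualMatrix

section Comparison

variable {p : ℕ} (S : Matrix (Fin p) (Fin p) ℝ) (P : Fin p → Finset (Fin p))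

noncomputable def residualChangeOfBasis : Matrix (Fin p) (Fin p) ℝ :=
  (residualMatrix S Iio)⁻¹ * residualMatrix S P

variable {S P}

theorem det_residualMatrix_Iio : (residualMatrix S Iio).det = 1 := by
  simpa using det_submatrix_residualMatrix (S := S) (b := id) (fun _ _ => mem_Iio.mp)
    Function.injective_id Function.injective_id

theorem residualMatrix_Iio_mul_residualChangeOfBasis :
    residualMatrix S Iio * residualChangeOfBasis S P = residualMatrix S P :=
  mul_nonsing_inv_cancel_left _ _ (det_residualMatrix_Iio ▸ isUnit_one)

theorem sum_condVar_eq_sum_mul_sum_sq (hS : S.PosDef) :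
    ∑ j, condVar S j (P j) =
      ∑ k, condVar S k (Iio k) * ∑ j, residualChangeOfBasis S P k j ^ 2 := by
  have hquad : (residualMatrix S P)ᵀ * S * residualMatrix S P =
      (residualChangeOfBasis S P)ᵀ * diagonal (fun k => condVar S k (Iio k)) *
        residualChangeOfBasis S P := by
    rw [← residualMatrix_Iio_mul_residualChangeOfBasis, transpose_mul,
      ← transpose_mul_mul_residualMatrix_Iio hS]
    simp only [Matrix.mul_assoc]
  calc ∑ j, condVar S j (P j)
      = ∑ j, ∑ k, condVar S k (Iio k) * residualChangeOfBasis S P k j ^ 2 :=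
        sum_congr rfl fun j _ => by
        rw [← transpose_mul_mul_residualMatrix_apply_self hS, hquad,
          transpose_mul_diagonal_mul_apply_self]
    _ = _ := by
      rw [sum_comm]
      simp_rw [mul_sum]

theorem card_Ici_le_sum_sum_sq {α : Type*} [LinearOrder α] {b : Fin p → α}
    (hP : ∀ i j, i ∈ P j → b i < b j) (hb : Function.Injective b) (k₀ : Fin p) :
    (#(Ici k₀) : ℝ) ≤ ∑ k ∈ Ici k₀, ∑ j, residualChangeOfBasis S P k j ^ 2 := by
  set A := residualChangeOfBasis S P
  have hIio : ∀ i j : Fin p, i ∈ Iio j → id i < id j := fun i j => mem_Iio.mp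
  have hdet : (A.submatrix ((↑) : Ici k₀ → Fin p) ((↑) : Ici k₀ → Fin p)).det = 1 := by
    have h := det_submatrix_residualMatrix (S := S) hP hb (f := ((↑) : Ici k₀ → Fin p))
      Subtype.val_injective
    rwa [← residualMatrix_Iio_mul_residualChangeOfBasis,
      IsUpperTriangular.submatrix_Ici_mul (blockTriangular_residualMatrix hIio), det_mul,
      det_submatrix_residualMatrix hIio Function.injective_id Subtype.val_injective,
      one_mul] at h
  calc (#(Ici k₀) : ℝ) = Fintype.card (Ici k₀) := by rw [Fintype.card_coe]
    _ ≤ ∑ k : Ici k₀, ∑ j : Ici k₀, A k j ^ 2 := card_le_sum_sq_of_det_eq_one hdet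
    _ ≤ ∑ k : Ici k₀, ∑ j, A k j ^ 2 := sum_le_sum fun k _ => by
        rw [sum_coe_sort (Ici k₀) fun j => A k j ^ 2]
        exact sum_le_sum_of_subset_of_nonneg (subset_univ _) fun j _ _ => sq_nonneg _
    _ = ∑ k ∈ Ici k₀, ∑ j, A k j ^ 2 := sum_coe_sort (Ici k₀) fun k => ∑ j, A k j ^ 2

end Comparison

/-- If the error variances `ω_j^ι = Var(X_j | X_1, …, X_{j-1})` under the identity
ordering `ι` are weakly increasing, then the identity ordering minimizes the trace of
the error-variance matrix: for every permutation `σ`, `∑_j ω_j^ι ≤ ∑_j ω_j^σ`. -/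
theorem stmt10 {p : ℕ} (S : Matrix (Fin p) (Fin p) ℝ) (hS : S.PosDef)
    (hmono : Monotone fun j => condVar S j (Finset.Iio j))
    (σ : Equiv.Perm (Fin p)) :
    ∑ j, condVar S j (Finset.Iio j) ≤ ∑ j, condVar S j (PRED σ j) := by
  have hPRED : ∀ i j, i ∈ PRED σ j → σ.symm i < σ.symm j := fun i j hi => by
    simpa [PRED] using hi
  rw [sum_condVar_eq_sum_mul_sum_sq (P := PRED σ) hS, ← sub_nonneg, ← sum_sub_distrib]
  simp_rw [← mul_sub_one]
  refine sum_mul_nonneg_of_sum_Ici_nonneg hmono (fun k => condVar_nonneg hS _ k) fun k => ?_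
  rw [sum_sub_distrib, sum_const, nsmul_one, sub_nonneg]
  exact card_Ici_le_sum_sum_sq hPRED σ.symm.injective k
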